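/- Let G be a finite group, let L be a minimal non-soluble subgroup of G (that is, L is not soluble but every proper subgroup of L is soluble), and let u ∈ L. Then β_G(u) ≥ (|C_G(u)| / |C_G(u) ∩ N_G(L)|) · β_L(u), and moreover β_G(u) ≥ (|C_G(u)| / (|C_G(L)| · |C_{Aut(L)}(ū)|)) · β_L(u), where ū denotes the inner automorphism of L induced by conjugation by u and C_{Aut(L)}(ū) is its centralizer in the automorphism group of L. -/

import Mathlib

/-- The map `θ_u : G → G`, `θ_u(g) = [g^{-u}, g]` where `[x,y] = x⁻¹y⁻¹xy`
and `x^y = y⁻¹xy`. -/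
def thetaMap {G : Type*} [Group G] (u g : G) : G :=
  (u⁻¹ * g⁻¹ * u)⁻¹ * g⁻¹ * (u⁻¹ * g⁻¹ * u) * g

/-- `Θ_G(u) = {g ∈ G ∣ θ_u^n(g) = g for some n > 0}`. -/
def ThetaSet {G : Type*} [Group G] (u : G) : Set G :=
  {g | ∃ n > 0, (thetaMap u)^[n] g = g}

/-- The forward orbit of `g` under `θ_u`; for `g ∈ Θ_G(u)` this is the orbit of `g`
under the permutation that `θ_u` induces on `Θ_G(u)`. -/
def thetaOrbit {G : Type*} [Group G] (u g : G) : Set G :=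
  {h | ∃ n : ℕ, (thetaMap u)^[n] g = h}

/-- The eventual orbits of `θ_u`: the orbits of the permutation induced by `θ_u`
on `Θ_G(u)`, other than the fixed orbit `{1}`. -/
def eventualOrbits {G : Type*} [Group G] (u : G) : Set (Set G) :=
  {O | (∃ g ∈ ThetaSet u, O = thetaOrbit u g) ∧ O ≠ {1}}

/-- `β_G(u)`: the number of eventual orbits of `θ_u`. -/
noncomputable def beta {G : Type*} [Group G] (u : G) : ℕ :=
  (eventualOrbits u).ncard

/-!
Every `θ_u(g)` is a commutator of conjugates of `g` and `g⁻¹`, so a periodic point of `θ_u` lies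
in every term of the derived series; in a soluble group the only one is `1`.
If `c, c' ∈ C_G(u)` conjugate `L` to different subgroups, then `L^c ∩ L^{c'}` is a proper subgroup
of `L^c`, hence soluble, and it contains `u`; so the two conjugates share no nontrivial periodic
point of `θ_u`. Conjugating the eventual orbits of `θ_ū` on `L` by a transversal of
`C_G(u) ∩ N_G(L)` in `C_G(u)` therefore gives `|C_G(u) : C_G(u) ∩ N_G(L)| ⬝ β_L(u)` distinct
eventual orbits of `θ_u` on `G`. For the second bound, `C_G(u) ∩ N_G(L)` acts on `L` by
conjugation with kernel in `C_G(L)` and image centralising `ū`.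
-/

open Function Pointwise Subgroup

section

variable {G G' : Type*} [Group G] [Group G']

theorem semiconj_thetaMap (f : G →* G') (u : G) : Semiconj f (thetaMap u) (thetaMap (f u)) :=
  fun g => by simp [thetaMap]

theorem thetaMap_one (u : G) : thetaMap u 1 = 1 := by simp [thetaMap]

theorem thetaOrbit_one (u : G) : thetaOrbit u (1 : G) = {1} := by
  simp [thetaOrbit, iterate_fixed (thetaMap_one u)]

theorem mem_thetaOrbit_self (u g : G) : g ∈ thetaOrbit u g := ⟨0, rfl⟩

theorem image_thetaOrbit (f : G →* G') (u g : G) :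
    f '' thetaOrbit u g = thetaOrbit (f u) (f g) := by
  ext h
  constructor
  · rintro ⟨_, ⟨n, rfl⟩, rfl⟩
    exact ⟨n, ((semiconj_thetaMap f u).iterate_right n g).symm⟩
  · rintro ⟨n, rfl⟩
    exact ⟨_, ⟨n, rfl⟩, (semiconj_thetaMap f u).iterate_right n g⟩

theorem map_mem_thetaSet (f : G →* G') {u g : G} (hg : g ∈ ThetaSet u) :
    f g ∈ ThetaSet (f u) :=
  (semiconj_thetaMap f u).mapsTo_periodicPts hg

theorem mem_thetaSet_of_map_mem (f : G →* G') (hf : Injective f) {u g : G}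
    (hg : f g ∈ ThetaSet (f u)) : g ∈ ThetaSet u := by
  obtain ⟨n, hn, hfix⟩ := hg
  exact ⟨n, hn, hf <| ((semiconj_thetaMap f u).iterate_right n g).trans hfix⟩

theorem exists_eq_thetaOrbit_of_mem_eventualOrbits {u : G} {O : Set G}
    (hO : O ∈ eventualOrbits u) : ∃ g ∈ ThetaSet u, g ≠ 1 ∧ O = thetaOrbit u g := by
  obtain ⟨⟨g, hg, rfl⟩, hne⟩ := hO
  exact ⟨g, hg, by rintro rfl; exact hne (thetaOrbit_one u), rfl⟩

theorem image_mem_eventualOrbits (f : G →* G') (hf : Injective f) {u : G} {O : Set G}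
    (hO : O ∈ eventualOrbits u) : f '' O ∈ eventualOrbits (f u) := by
  obtain ⟨g, hg, hg1, rfl⟩ := exists_eq_thetaOrbit_of_mem_eventualOrbits hO
  refine ⟨⟨f g, map_mem_thetaSet f hg, image_thetaOrbit f u g⟩, fun h => hg1 ?_⟩
  have : f g ∈ f '' thetaOrbit u g := Set.mem_image_of_mem f (mem_thetaOrbit_self u g)
  rw [h, Set.mem_singleton_iff, ← map_one f] at this
  exact hf this

open scoped commutatorElement in
theorem thetaMap_eq_commutatorElement (u g : G) : thetaMap u g = ⁅u⁻¹ * g * u, g⁻¹⁆ := by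
  simp only [thetaMap, commutatorElement_def]
  group

theorem thetaMap_iterate_mem_derivedSeries (u g : G) (n : ℕ) :
    (thetaMap u)^[n] g ∈ derivedSeries G n := by
  induction n with
  | zero => exact mem_top g
  | succ n ih =>
    rw [iterate_succ_apply', thetaMap_eq_commutatorElement, derivedSeries_succ]
    refine commutator_mem_commutator ?_ (inv_mem ih)
    simpa using (derivedSeries_normal G n).conj_mem _ ih u⁻¹

theorem eq_one_of_mem_thetaSet [Group.IsSolvable G] {u g : G} (hg : g ∈ ThetaSet u) :
    g = 1 := by
  obtain ⟨n, hn, hfix⟩ := hg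
  have hper : IsPeriodicPt (thetaMap u) n g := hfix
  by_contra hg1
  refine not_isSolvable_of_mem_derivedSeries hg1 (fun k => ?_) ‹_›
  have hmem := thetaMap_iterate_mem_derivedSeries u g (n * k)
  rw [(hper.mul_const k).eq] at hmem
  exact derivedSeries_antitone G (Nat.le_mul_of_pos_left k hn) hmem

theorem Subgroup.eq_one_of_mem_thetaSet (K : Subgroup G) [Group.IsSolvable K] {u g : G}
    (hu : u ∈ K) (hg : g ∈ K) (hθ : g ∈ ThetaSet u) : g = 1 := by
  have : (⟨g, hg⟩ : K) ∈ ThetaSet (⟨u, hu⟩ : K) :=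
    mem_thetaSet_of_map_mem K.subtype K.subtype_injective hθ
  simpa using congrArg Subtype.val (_root_.eq_one_of_mem_thetaSet this)

theorem conj_smul_eq_self_iff {L : Subgroup G} {g : G} :
    MulAut.conj g • L = L ↔ g ∈ normalizer (L : Set G) :=
  conjAct_pointwise_smul_iff

theorem conj_smul_eq_conj_smul_iff {L : Subgroup G} {c c' : G} :
    MulAut.conj c • L = MulAut.conj c' • L ↔ c⁻¹ * c' ∈ normalizer (L : Set G) := by
  rw [← conj_smul_eq_self_iff, map_mul, map_inv, mul_smul, inv_smul_eq_iff, eq_comm]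

theorem card_conj_smul (g : G) (L : Subgroup G) : Nat.card ↥(MulAut.conj g • L) = Nat.card L :=
  (Nat.card_congr (equivSMul _ L).toEquiv).symm

theorem conj_eq_self_of_mem_centralizer {u c : G} (hc : c ∈ centralizer {u}) :
    MulAut.conj c u = u := by
  rw [MulAut.conj_apply, mem_centralizer_singleton_iff.mp hc, mul_inv_cancel_right]

theorem mem_conj_smul_of_mem_centralizer {L : Subgroup G} {u c : G} (hu : u ∈ L)
    (hc : c ∈ centralizer {u}) : u ∈ MulAut.conj c • L :=
  conj_eq_self_of_mem_centralizer hc ▸ smul_mem_pointwise_smul u _ L hu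

theorem isSolvable_of_lt_conj_smul {L : Subgroup G}
    (hmin : ∀ H : Subgroup G, H < L → Group.IsSolvable H) (g : G) {H : Subgroup G}
    (hH : H < MulAut.conj g • L) : Group.IsSolvable H := by
  have hlt : (MulAut.conj g)⁻¹ • H < L :=
    lt_of_le_not_ge (subset_pointwise_smul_iff.mp hH.le)
      fun h => hH.not_ge (pointwise_smul_subset_iff.mpr h)
  have := hmin _ hlt
  exact Group.isSolvable_of_isSolvable_injective
    (f := (equivSMul (MulAut.conj g)⁻¹ H).toMonoidHom) (equivSMul _ H).injective

theorem conj_smul_eq_of_mem_thetaSet [Finite G] {L : Subgroup G}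
    (hmin : ∀ H : Subgroup G, H < L → Group.IsSolvable H) {u c c' w : G} (hu : u ∈ L)
    (hc : c ∈ centralizer {u}) (hc' : c' ∈ centralizer {u}) (hθ : w ∈ ThetaSet u) (hw : w ≠ 1)
    (hwc : w ∈ MulAut.conj c • L) (hwc' : w ∈ MulAut.conj c' • L) :
    MulAut.conj c • L = MulAut.conj c' • L := by
  by_contra hne
  have hlt : MulAut.conj c • L ⊓ MulAut.conj c' • L < MulAut.conj c • L :=
    inf_le_left.lt_of_ne fun h => hne <| eq_of_le_of_card_ge (inf_eq_left.mp h)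
      (by rw [card_conj_smul, card_conj_smul])
  have := isSolvable_of_lt_conj_smul hmin c hlt
  exact hw <| (MulAut.conj c • L ⊓ MulAut.conj c' • L).eq_one_of_mem_thetaSet
    ⟨mem_conj_smul_of_mem_centralizer hu hc, mem_conj_smul_of_mem_centralizer hu hc'⟩
    ⟨hwc, hwc'⟩ hθ

theorem relIndex_normalizer_mul_beta_le [Finite G] {L : Subgroup G}
    (hmin : ∀ H : Subgroup G, H < L → Group.IsSolvable H) {u : G} (hu : u ∈ L) :
    (normalizer (L : Set G)).relIndex (centralizer {u}) * beta (⟨u, hu⟩ : L) ≤ beta u := by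
  set C := centralizer {u}
  let φ : C → L →* G := fun c => (MulAut.conj (c : G)).toMonoidHom.comp L.subtype
  have hφ_inj (c : C) : Injective (φ c) :=
    (MulAut.conj (c : G)).injective.comp L.subtype_injective
  have hφ_u (c : C) : φ c ⟨u, hu⟩ = u := conj_eq_self_of_mem_centralizer c.2
  have hφ_mem (c : C) (x : L) : φ c x ∈ MulAut.conj (c : G) • L :=
    smul_mem_pointwise_smul _ _ L x.2
  let F : (C ⧸ (normalizer (L : Set G)).subgroupOf C) × eventualOrbits (⟨u, hu⟩ : L) →
      eventualOrbits u := fun p =>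
    ⟨φ p.1.out '' p.2, by simpa only [hφ_u] using image_mem_eventualOrbits _ (hφ_inj _) p.2.2⟩
  have hF : Injective F := by
    rintro ⟨q, O⟩ ⟨q', O'⟩ hqO
    have himage : φ q.out '' O = φ q'.out '' O' := congrArg Subtype.val hqO
    obtain ⟨g, hg, hg1, hO⟩ := exists_eq_thetaOrbit_of_mem_eventualOrbits O.2
    obtain ⟨g', -, hg'⟩ : φ q.out g ∈ φ q'.out '' O' :=
      himage ▸ Set.mem_image_of_mem _ (hO ▸ mem_thetaOrbit_self _ g)
    have hconj := conj_smul_eq_of_mem_thetaSet hmin hu q.out.2 q'.out.2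
      (hφ_u q.out ▸ map_mem_thetaSet _ hg) ((map_ne_one_iff _ (hφ_inj _)).mpr hg1)
      (hφ_mem _ _) (by rw [← hg']; exact hφ_mem _ _)
    have hq : q = q' := by
      rw [← QuotientGroup.out_eq' q, ← QuotientGroup.out_eq' q', QuotientGroup.eq,
        mem_subgroupOf]
      exact conj_smul_eq_conj_smul_iff.mp hconj
    subst hq
    exact Prod.ext rfl (Subtype.ext (Set.image_injective.mpr (hφ_inj _) himage))
  simpa [beta, relIndex, index, Nat.card_prod, Nat.card_coe_set_eq] using
    Nat.card_le_card_of_injective F hF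

theorem card_centralizer_inf_normalizer_le [Finite G] (L : Subgroup G) {u : G} (hu : u ∈ L) :
    Nat.card ↥(centralizer {u} ⊓ normalizer (L : Set G)) ≤
      Nat.card (centralizer (L : Set G)) *
        Nat.card (centralizer {MulAut.conj (⟨u, hu⟩ : L)} : Subgroup (MulAut L)) := by
  set D := centralizer {u} ⊓ normalizer (L : Set G)
  let ψ : D →* MulAut L := L.normalizerMonoidHom.comp (inclusion inf_le_right)
  have hψ (d : D) (x : L) : (ψ d x : G) = d * x * (d : G)⁻¹ := rfl
  have hrange : ψ.range ≤ centralizer {MulAut.conj (⟨u, hu⟩ : L)} := by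
    rintro _ ⟨d, rfl⟩
    rw [mem_centralizer_singleton_iff]
    ext x
    have hdu : (d : G) * u = u * d := mem_centralizer_singleton_iff.mp d.2.1
    simp only [MulAut.mul_apply, MulAut.conj_apply, Subgroup.coe_mul, coe_inv, hψ]
    rw [show (d : G) * (u * x * u⁻¹) * (d : G)⁻¹ = (d * u) * x * (d * u : G)⁻¹ by group, hdu]
    group
  have hker : ψ.ker.map D.subtype ≤ centralizer (L : Set G) := by
    rintro _ ⟨d, hd, rfl⟩
    rw [mem_centralizer_iff]
    intro x hx
    have := congrArg (fun σ : MulAut L => (σ ⟨x, hx⟩ : G)) (MonoidHom.mem_ker.mp hd)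
    simp only [hψ] at this
    exact (mul_inv_eq_iff_eq_mul.mp this).symm
  calc Nat.card D = Nat.card ψ.ker * Nat.card ψ.range := by rw [← index_ker, card_mul_index]
    _ ≤ _ := Nat.mul_le_mul
      (card_map_of_injective D.subtype_injective ▸ card_le_of_le hker) (card_le_of_le hrange)

end

theorem beta_ge_of_minimal_nonsolvable_general {G : Type*} [Group G] [Finite G] (L : Subgroup G)
    (hmin : ∀ H : Subgroup G, H < L → IsSolvable H)
    (u : G) (hu : u ∈ L) :
    (Nat.card (Subgroup.centralizer {u}) : ℝ) /
        (Nat.card ((Subgroup.centralizer {u} ⊓ Subgroup.normalizer (L : Set G) : Subgroup G)) : ℝ) *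
        (beta (⟨u, hu⟩ : L) : ℝ) ≤ (beta u : ℝ) ∧
      (Nat.card (Subgroup.centralizer {u}) : ℝ) /
        ((Nat.card (Subgroup.centralizer (L : Set G)) : ℝ) *
          (Nat.card (Subgroup.centralizer {MulAut.conj (⟨u, hu⟩ : L)} : Subgroup (MulAut L)) : ℝ)) *
        (beta (⟨u, hu⟩ : L) : ℝ) ≤ (beta u : ℝ) := by
  set C := centralizer {u}
  set D := C ⊓ normalizer (L : Set G)
  have hlagrange : Nat.card C = Nat.card D * (normalizer (L : Set G)).relIndex C := by
    have := relIndex_mul_relIndex ⊥ D C bot_le inf_le_left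
    rwa [relIndex_bot_left, relIndex_bot_left, inf_relIndex_left, eq_comm] at this
  have hD : (0 : ℝ) < Nat.card D := by exact_mod_cast Nat.card_pos
  have hcount : ((normalizer (L : Set G)).relIndex C * beta (⟨u, hu⟩ : L) : ℝ) ≤ beta u := by
    exact_mod_cast relIndex_normalizer_mul_beta_le hmin hu
  have hfirst : (Nat.card C : ℝ) / Nat.card D * beta (⟨u, hu⟩ : L) ≤ beta u := by
    rwa [hlagrange, Nat.cast_mul, mul_div_cancel_left₀ _ hD.ne']
  refine ⟨hfirst, le_trans ?_ hfirst⟩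
  gcongr
  exact_mod_cast card_centralizer_inf_normalizer_le L hu

/-- Let `G` be a finite group, `L` a minimal non-soluble subgroup of `G` (i.e. `L` is not
soluble but every proper subgroup of `L` is soluble) and `u ∈ L`.  Then
`β_G(u) ≥ (|C_G(u)| / |C_G(u) ∩ N_G(L)|) ⬝ β_L(u)` and
`β_G(u) ≥ (|C_G(u)| / (|C_G(L)| ⬝ |C_{Aut L}(ū)|)) ⬝ β_L(u)`, where `ū` is the inner
automorphism of `L` given by conjugation by `u`. -/
theorem beta_ge_of_minimal_nonsolvable {G : Type*} [Group G] [Finite G] (L : Subgroup G)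
    (hL : ¬ IsSolvable L)
    (hmin : ∀ H : Subgroup G, H < L → IsSolvable H)
    (u : G) (hu : u ∈ L) :
    (Nat.card (Subgroup.centralizer {u}) : ℝ) /
        (Nat.card ((Subgroup.centralizer {u} ⊓ Subgroup.normalizer (L : Set G) : Subgroup G)) : ℝ) *
        (beta (⟨u, hu⟩ : L) : ℝ) ≤ (beta u : ℝ) ∧
      (Nat.card (Subgroup.centralizer {u}) : ℝ) /
        ((Nat.card (Subgroup.centralizer (L : Set G)) : ℝ) *
          (Nat.card (Subgroup.centralizer {MulAut.conj (⟨u, hu⟩ : L)} : Subgroup (MulAut L)) : ℝ)) *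
        (beta (⟨u, hu⟩ : L) : ℝ) ≤ (beta u : ℝ) :=
  beta_ge_of_minimal_nonsolvable_general L hmin u hu
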